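/- arXiv:1204.0601 — 3 statements merged into one kernel-verified Lean document; each statement's English description precedes it below -/
import Mathlib

section
/- Let C be a finite-type Cartan matrix with symmetrizers d_k (d_k C_{kj} = d_j C_{jk}), highest root θ = Σ_{i≠0} θ_i α_i normalized so that ⟨θ,θ⟩ = 2, and extended affine Cartan matrix with C_{k0} = −Σ_{j≠0} θ_j C_{kj} and θ_0 = 1. Fix a permutation σ of {0,…,r} and set μ = −Σ_{k≠0}(θ_k + Σ_{j >_σ k} θ_j C_{kj}) ω_k, where ω_k are the fundamental weights of C and j >_σ k means σ⁻¹(j) > σ⁻¹(k). Then Σ_{k≠0} d_k θ_k (θ_k + Σ_{j≠0, j >_σ k} θ_j C_{kj}) + Σ_{k <_σ 0} d_k θ_k C_{k0} − Σ_{k≠0, j >_σ 0} d_k θ_k θ_j C_{kj} = −1. -/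
open Finset

/-!
STATEMENT 10: The key arithmetic identity in the proof that s_{σ(0)}⋯s_{σ(r)}(μ) = μ:
Σ_{k≠0} d_k θ_k (θ_k + Σ_{j≠0, j >_σ k} θ_j C_{kj}) + Σ_{k≠0, k <_σ 0} d_k θ_k C_{k0}
  − Σ_{k≠0, j≠0, j >_σ 0} d_k θ_k θ_j C_{kj} = −1,
given the symmetrizers d, marks θ (θ_0 = 1), extended Cartan matrix relations
C_{k0} = −Σ_{j≠0} θ_j C_{kj}, C_{kk} = 2 and Σ_{j,k≠0} d_k θ_j θ_k C_{kj} = 2.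
Here j >_σ k means σ⁻¹(j) > σ⁻¹(k).
-/

theorem affine_coxeter_weight_identity (r : ℕ)
    (C : Fin (r + 1) → Fin (r + 1) → ℝ)
    (d θ : Fin (r + 1) → ℝ)
    (σ : Equiv.Perm (Fin (r + 1)))
    (hθ0 : θ 0 = 1)
    (hsym : ∀ k j, d k * C k j = d j * C j k)
    (hCkk : ∀ k, C k k = 2)
    (hC0 : ∀ k, C k 0 = -∑ j ∈ univ.filter (· ≠ 0), θ j * C k j)
    (hsum : ∑ j ∈ univ.filter (· ≠ 0), ∑ k ∈ univ.filter (· ≠ 0),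
        d k * θ j * θ k * C k j = 2) :
    (∑ k ∈ univ.filter (· ≠ 0), d k * θ k *
        (θ k + ∑ j ∈ univ.filter (fun j => j ≠ 0 ∧ σ.symm k < σ.symm j), θ j * C k j))
      + (∑ k ∈ univ.filter (fun k => k ≠ 0 ∧ σ.symm k < σ.symm 0), d k * θ k * C k 0)
      - (∑ k ∈ univ.filter (· ≠ 0),
          ∑ j ∈ univ.filter (fun j => j ≠ 0 ∧ σ.symm 0 < σ.symm j),
            d k * θ k * θ j * C k j)
      = -1 := by
  classical
  set S : Finset (Fin (r + 1)) := univ.filter (· ≠ 0) with hS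
  set F : Fin (r + 1) → Fin (r + 1) → ℝ := fun k j => d k * θ k * θ j * C k j with hF
  have hFsymm : ∀ k j, F k j = F j k := by
    intro k j
    simp only [hF]
    have h1 : d k * θ k * θ j * C k j = θ k * θ j * (d k * C k j) := by ring
    rw [h1, hsym k j]; ring
  -- total sum of F over S × S is 2
  have hFtot : ∑ k ∈ S, ∑ j ∈ S, F k j = 2 := by
    rw [Finset.sum_comm]
    rw [← hsum]
    exact Finset.sum_congr rfl fun j _ => Finset.sum_congr rfl fun k _ => by ring
  -- diagonal
  have hDiag : ∀ k, F k k = 2 * (d k * θ k * θ k) := by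
    intro k; simp only [hF, hCkk k]; ring
  set D : ℝ := ∑ k ∈ S, d k * θ k * θ k with hD
  set A : ℝ := ∑ k ∈ S, ∑ j ∈ S, if σ.symm k < σ.symm j then F k j else 0 with hA
  set A2 : ℝ := ∑ k ∈ S, ∑ j ∈ S, if σ.symm j < σ.symm k then F k j else 0 with hA2
  set B : ℝ := ∑ k ∈ S, ∑ j ∈ S, if σ.symm k < σ.symm 0 then F k j else 0 with hB
  set B2 : ℝ := ∑ k ∈ S, ∑ j ∈ S, if σ.symm j < σ.symm 0 then F k j else 0 with hB2
  set E : ℝ := ∑ k ∈ S, ∑ j ∈ S, if σ.symm 0 < σ.symm j then F k j else 0 with hE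
  -- swap lemmas
  have hAA2 : A = A2 := by
    rw [hA, Finset.sum_comm, hA2]
    exact Finset.sum_congr rfl fun k _ => Finset.sum_congr rfl fun j _ => by
      rw [hFsymm]
  have hBB2 : B = B2 := by
    rw [hB, Finset.sum_comm, hB2]
    exact Finset.sum_congr rfl fun k _ => Finset.sum_congr rfl fun j _ => by
      rw [hFsymm]
  -- membership facts
  have hmemS : ∀ k : Fin (r + 1), k ∈ S ↔ k ≠ 0 := by
    intro k; simp [hS]
  -- A + A2 + 2 * D = 2
  have hDg : ∑ k ∈ S, ∑ j ∈ S, (if k = j then F k j else 0) = 2 * D := by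
    rw [hD, Finset.mul_sum]
    refine Finset.sum_congr rfl fun k hk => ?_
    rw [Finset.sum_ite_eq S k (fun j => F k j), if_pos hk, hDiag k]
  have htri : A + A2 + 2 * D = 2 := by
    rw [← hDg, hA, hA2, ← hFtot]
    rw [← Finset.sum_add_distrib, ← Finset.sum_add_distrib]
    refine Finset.sum_congr rfl fun k _ => ?_
    rw [← Finset.sum_add_distrib, ← Finset.sum_add_distrib]
    refine Finset.sum_congr rfl fun j _ => ?_
    rcases lt_trichotomy (σ.symm k) (σ.symm j) with h | h | h
    · rw [if_pos h, if_neg (not_lt_of_gt h), if_neg]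
      · ring
      · intro hkj; subst hkj; exact lt_irrefl _ h
    · have hkj : k = j := σ.symm.injective h
      rw [if_neg (by rw [h]; exact lt_irrefl _), if_neg (by rw [h]; exact lt_irrefl _),
        if_pos hkj]
      ring
    · rw [if_neg (not_lt_of_gt h), if_pos h, if_neg]
      · ring
      · intro hkj; subst hkj; exact lt_irrefl _ h
  -- B2 + E = 2
  have hBE : B2 + E = 2 := by
    rw [hB2, hE, ← hFtot, ← Finset.sum_add_distrib]
    refine Finset.sum_congr rfl fun k _ => ?_
    rw [← Finset.sum_add_distrib]
    refine Finset.sum_congr rfl fun j hj => ?_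
    have hj0 : j ≠ 0 := (hmemS j).mp hj
    have hne : σ.symm j ≠ σ.symm 0 := fun h => hj0 (σ.symm.injective h)
    rcases lt_or_gt_of_ne hne with h | h
    · rw [if_pos h, if_neg (not_lt_of_gt h)]; ring
    · rw [if_neg (not_lt_of_gt h), if_pos h]; ring
  -- rewrite the three terms of the goal
  have hT1 : (∑ k ∈ univ.filter (· ≠ 0), d k * θ k *
        (θ k + ∑ j ∈ univ.filter (fun j => j ≠ 0 ∧ σ.symm k < σ.symm j), θ j * C k j))
      = D + A := by
    rw [hD, hA, ← Finset.sum_add_distrib]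
    refine Finset.sum_congr rfl fun k _ => ?_
    have hfilt : univ.filter (fun j => j ≠ 0 ∧ σ.symm k < σ.symm j)
        = S.filter (fun j => σ.symm k < σ.symm j) := by
      rw [hS, Finset.filter_filter]
    rw [hfilt, Finset.sum_filter, mul_add, Finset.mul_sum]
    congr 1
    refine Finset.sum_congr rfl fun j _ => ?_
    split_ifs with h
    · simp only [hF]; ring
    · ring
  have hT2 : (∑ k ∈ univ.filter (fun k => k ≠ 0 ∧ σ.symm k < σ.symm 0),
        d k * θ k * C k 0) = -B := by
    have hfilt : univ.filter (fun k => k ≠ 0 ∧ σ.symm k < σ.symm 0)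
        = S.filter (fun k => σ.symm k < σ.symm 0) := by
      rw [hS, Finset.filter_filter]
    rw [hfilt, Finset.sum_filter, hB, ← Finset.sum_neg_distrib]
    refine Finset.sum_congr rfl fun k _ => ?_
    split_ifs with h
    · rw [hC0 k, mul_neg, Finset.mul_sum, neg_inj]
      refine Finset.sum_congr rfl fun j _ => ?_
      simp only [hF]; ring
    · simp
  have hT3 : (∑ k ∈ univ.filter (· ≠ 0),
        ∑ j ∈ univ.filter (fun j => j ≠ 0 ∧ σ.symm 0 < σ.symm j),
          d k * θ k * θ j * C k j) = E := by
    rw [hE]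
    refine Finset.sum_congr rfl fun k _ => ?_
    have hfilt : univ.filter (fun j => j ≠ 0 ∧ σ.symm 0 < σ.symm j)
        = S.filter (fun j => σ.symm 0 < σ.symm j) := by
      rw [hS, Finset.filter_filter]
    rw [hfilt, Finset.sum_filter]
  rw [hT1, hT2, hT3]
  linarith [htri, hBE, hAA2, hBB2]
end

section
/- Consider the Laurent polynomial algebra ℂ[T₀^{±1}, S₀^{±1}, …, T_r^{±1}, S_r^{±1}, Q^{±1}] with the Poisson bracket determined on generators by {S_i, T_k} = 2 d_i S_i T_i δ_{i,k}, {Q, T_k} = d_k θ_k Q T_k, {S_i, S_k} = 2 d_k C_{ki} ε_{ik} S_i S_k, {Q, S_k} = (Σ_{i≠k} θ_i d_k C_{ki} ε_{ik}) Q S_k, {T_i, T_k} = 0, where ε_{ik} = [i >_σ k and k >_τ i] − [i >_τ k and k >_σ i] ∈ {−1,0,1} for permutations σ, τ of {0,…,r}. Then the element Q² · Π_{k=0}^{r} S_k^{−θ_k} is a Casimir: it Poisson-commutes with every generator. -/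
open Finset

/-!
STATEMENT 14: In the Laurent Poisson algebra with generators T_i, S_i, Q and bracket
{S_i,T_k} = 2 d_i S_i T_i δ_{ik}, {Q,T_k} = d_k θ_k Q T_k,
{S_i,S_k} = 2 d_k C_{ki} ε_{ik} S_i S_k, {Q,S_k} = (Σ_{i≠k} θ_i d_k C_{ki} ε_{ik}) Q S_k,
{T_i,T_k} = 0, the element Q² Π_k S_k^{−θ_k} is a Casimir.
-/

/-- ε_{ik} = [i >_σ k and k >_τ i] − [i >_τ k and k >_σ i], where i >_σ k means
σ⁻¹(i) > σ⁻¹(k). -/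
def epsilonSigTau {r : ℕ} (σ τ : Equiv.Perm (Fin (r + 1))) (i k : Fin (r + 1)) : ℤ :=
  (if σ.symm k < σ.symm i ∧ τ.symm i < τ.symm k then 1 else 0)
    - (if τ.symm k < τ.symm i ∧ σ.symm i < σ.symm k then 1 else 0)

theorem reduced_cell_casimir (r : ℕ)
    (R : Type*) [CommRing R] [Algebra ℂ R]
    (d : Fin (r + 1) → ℂ) (θ : Fin (r + 1) → ℕ)
    (C : Fin (r + 1) → Fin (r + 1) → ℤ)
    (σ τ : Equiv.Perm (Fin (r + 1)))
    (hθ0 : θ 0 = 1)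
    -- positive symmetrizers: d_k C_{ki} = d_i C_{ik}
    (hsym : ∀ k i, d k * (C k i : ℂ) = d i * (C i k : ℂ))
    (hC0 : ∀ k, (C k 0 : ℂ) = -∑ j ∈ univ.filter (· ≠ 0), (θ j : ℂ) * C k j)
    (hC0' : ∀ i, (C 0 i : ℂ) = -∑ j ∈ univ.filter (· ≠ 0), (θ j : ℂ) * C j i)
    -- the invertible generators T_i, S_i, Q of the Laurent algebra
    (T S : Fin (r + 1) → Rˣ) (Q : Rˣ)
    -- the Poisson bracket, a skew biderivation satisfying the Jacobi identity
    (br : R →ₗ[ℂ] R →ₗ[ℂ] R)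
    (skew : ∀ f g, br f g = -br g f)
    (leibniz : ∀ f g h, br f (g * h) = g * br f h + h * br f g)
    (jacobi : ∀ f g h, br f (br g h) + br g (br h f) + br h (br f g) = 0)
    -- the bracket relations on the generators:
    (hST : ∀ i k, br (S i) (T k)
      = if i = k then (2 * d i) • ((S i : R) * (T i : R)) else 0)
    (hQT : ∀ k, br (Q : R) (T k) = (d k * (θ k : ℂ)) • ((Q : R) * (T k : R)))
    (hSS : ∀ i k, br (S i) (S k)
      = (2 * d k * (C k i : ℂ) * (epsilonSigTau σ τ i k : ℂ)) • ((S i : R) * (S k : R)))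
    (hQS : ∀ k, br (Q : R) (S k)
      = (∑ i ∈ univ.filter (· ≠ k),
          (θ i : ℂ) * d k * (C k i : ℂ) * (epsilonSigTau σ τ i k : ℂ))
        • ((Q : R) * (S k : R)))
    (hTT : ∀ i k, br (T i : R) (T k : R) = 0) :
    -- then Q² Π_k S_k^{−θ_k} Poisson-commutes with every generator:
    let Cas : R := ((Q ^ 2 * ∏ k, (S k)⁻¹ ^ (θ k) : Rˣ) : R)
    (∀ k, br Cas (T k) = 0) ∧ (∀ k, br Cas (S k) = 0) ∧ br Cas (Q : R) = 0 := by
  intro Cas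
  -- epsilon facts
  have εanti : ∀ i k, epsilonSigTau σ τ k i = -epsilonSigTau σ τ i k := by
    intro i k
    simp only [epsilonSigTau]
    by_cases h1 : σ.symm k < σ.symm i <;> by_cases h2 : σ.symm i < σ.symm k <;>
      by_cases h3 : τ.symm k < τ.symm i <;> by_cases h4 : τ.symm i < τ.symm k <;>
      simp [h1, h2, h3, h4]
  have εdiag : ∀ i, epsilonSigTau σ τ i i = 0 := by
    intro i; simp [epsilonSigTau]
  -- bracket with 1 vanishes
  have hbr1 : ∀ g : R, br g 1 = 0 := by
    intro g
    have h := leibniz g 1 1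
    simp only [mul_one, one_mul] at h
    linear_combination -h
  have hbr1' : ∀ g : R, br 1 g = 0 := by
    intro g; rw [skew, hbr1, neg_zero]
  -- splitting products in the first argument
  have hsplit : ∀ (u v : Rˣ) (g : R),
      br ((u * v : Rˣ) : R) g = (u : R) * br (v : R) g + (v : R) * br (u : R) g := by
    intro u v g
    rw [Units.val_mul, skew, leibniz, skew g (u : R), skew g (v : R)]
    ring
  -- graded-commutation predicate lemmas
  have hmul : ∀ (u v : Rˣ) (g : R) (c e : ℂ),
      br (u : R) g = c • ((u : R) * g) → br (v : R) g = e • ((v : R) * g) →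
      br ((u * v : Rˣ) : R) g = (c + e) • (((u * v : Rˣ) : R) * g) := by
    intro u v g c e hu hv
    rw [hsplit, hu, hv, Units.val_mul]
    simp only [Algebra.smul_def, map_add]
    ring
  have hinv : ∀ (u : Rˣ) (g : R) (c : ℂ),
      br (u : R) g = c • ((u : R) * g) →
      br ((u⁻¹ : Rˣ) : R) g = (-c) • (((u⁻¹ : Rˣ) : R) * g) := by
    intro u g c hu
    have h0 := hsplit u u⁻¹ g
    rw [mul_inv_cancel, Units.val_one, hbr1', hu] at h0
    apply (Units.mul_right_inj u).mp
    have huu : ((u⁻¹ : Rˣ) : R) * (u : R) = 1 := Units.inv_mul u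
    have h1 : (u : R) * br ((u⁻¹ : Rˣ) : R) g = -(((u⁻¹ : Rˣ) : R) * (c • ((u : R) * g))) := by
      linear_combination -h0
    rw [h1]
    simp only [Algebra.smul_def, map_neg]
    ring
  have hpow : ∀ (u : Rˣ) (g : R) (c : ℂ),
      br (u : R) g = c • ((u : R) * g) → ∀ n : ℕ,
      br ((u ^ n : Rˣ) : R) g = ((n : ℂ) * c) • (((u ^ n : Rˣ) : R) * g) := by
    intro u g c hu n
    induction n with
    | zero => simp [hbr1']
    | succ n ih =>
        have := hmul (u ^ n) u g ((n : ℂ) * c) c ih hu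
        rw [← pow_succ] at this
        rw [this]
        push_cast
        ring_nf
  have hprod : ∀ (g : R) (f : Fin (r + 1) → Rˣ) (c : Fin (r + 1) → ℂ)
      (s : Finset (Fin (r + 1))),
      (∀ k ∈ s, br (f k : R) g = c k • ((f k : R) * g)) →
      br ((∏ k ∈ s, f k : Rˣ) : R) g = (∑ k ∈ s, c k) • (((∏ k ∈ s, f k : Rˣ) : R) * g) := by
    intro g f c s
    induction s using Finset.cons_induction with
    | empty => intro _; simp [hbr1']
    | cons a s ha ih =>
        intro h
        rw [Finset.prod_cons, Finset.sum_cons]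
        exact hmul _ _ _ _ _ (h a (Finset.mem_cons_self a s))
          (ih fun k hk => h k (Finset.mem_cons_of_mem hk))
  -- the master computation for the Casimir
  have hCas : ∀ (g : R) (cQ : ℂ) (cS : Fin (r + 1) → ℂ),
      br (Q : R) g = cQ • ((Q : R) * g) →
      (∀ k, br (S k : R) g = cS k • ((S k : R) * g)) →
      br Cas g = (2 * cQ + ∑ k, (θ k : ℂ) * (-(cS k))) • (Cas * g) := by
    intro g cQ cS hQ hS
    have hQ2 := hpow Q g cQ hQ 2
    have hSk : ∀ k, br (((S k)⁻¹ ^ θ k : Rˣ) : R) g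
        = ((θ k : ℂ) * (-(cS k))) • ((((S k)⁻¹ ^ θ k : Rˣ) : R) * g) :=
      fun k => hpow _ g _ (hinv (S k) g (cS k) (hS k)) (θ k)
    have := hmul (Q ^ 2) (∏ k, (S k)⁻¹ ^ θ k) g ((2 : ℂ) * cQ)
      (∑ k, (θ k : ℂ) * (-(cS k))) (by exact_mod_cast hQ2)
      (hprod g _ _ univ fun k _ => hSk k)
    exact this
  refine ⟨?_, ?_, ?_⟩
  · -- T k
    intro k
    have hSfit : ∀ i, br (S i : R) (T k)
        = (if i = k then 2 * d i else 0) • ((S i : R) * (T k : R)) := by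
      intro i
      by_cases h : i = k
      · subst h; simp [hST]
      · simp [hST, h]
    have h := hCas (T k) (d k * (θ k : ℂ)) (fun i => if i = k then 2 * d i else 0)
      (hQT k) hSfit
    rw [h]
    have hc : (2 * (d k * (θ k : ℂ))
        + ∑ i, (θ i : ℂ) * (-(if i = k then 2 * d i else 0))) = 0 := by
      have hsum : (∑ i, (θ i : ℂ) * (-(if i = k then 2 * d i else 0)))
          = -((θ k : ℂ) * (2 * d k)) := by
        rw [Finset.sum_eq_single k]
        · simp
        · intro b _ hb; simp [hb]
        · simp
      rw [hsum]; ring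
    rw [hc, zero_smul]
  · -- S k
    intro k
    have hSfit : ∀ i, br (S i : R) (S k)
        = (2 * d k * (C k i : ℂ) * (epsilonSigTau σ τ i k : ℂ))
          • ((S i : R) * (S k : R)) := fun i => hSS i k
    have h := hCas (S k) _ _ (hQS k) hSfit
    rw [h]
    have hdrop : ∑ i ∈ univ.filter (· ≠ k),
        (θ i : ℂ) * d k * (C k i : ℂ) * (epsilonSigTau σ τ i k : ℂ)
        = ∑ i, (θ i : ℂ) * d k * (C k i : ℂ) * (epsilonSigTau σ τ i k : ℂ) := by
      apply Finset.sum_filter_of_ne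
      intro x _ hx
      rintro rfl
      apply hx
      simp [εdiag]
    have hc : (2 * (∑ i ∈ univ.filter (· ≠ k),
          (θ i : ℂ) * d k * (C k i : ℂ) * (epsilonSigTau σ τ i k : ℂ))
        + ∑ i, (θ i : ℂ)
            * (-(2 * d k * (C k i : ℂ) * (epsilonSigTau σ τ i k : ℂ)))) = 0 := by
      rw [hdrop, Finset.mul_sum, ← Finset.sum_add_distrib]
      apply Finset.sum_eq_zero
      intro i _
      ring
    rw [hc, zero_smul]
  · -- Q
    have hQQ : br (Q : R) (Q : R) = 0 := by
      have h2 : (2 : ℂ) • br (Q : R) (Q : R) = 0 := by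
        rw [two_smul]; linear_combination skew (Q : R) (Q : R)
      have := congrArg (fun x => ((2 : ℂ)⁻¹) • x) h2
      simpa [smul_smul] using this
    have hSfit : ∀ i, br (S i : R) (Q : R)
        = (-(∑ j ∈ univ.filter (· ≠ i),
            (θ j : ℂ) * d i * (C i j : ℂ) * (epsilonSigTau σ τ j i : ℂ)))
          • ((S i : R) * (Q : R)) := by
      intro i
      rw [skew, hQS i]
      simp only [Algebra.smul_def, map_neg]
      ring
    have h := hCas (Q : R) 0 _ (by rw [hQQ]; simp) hSfit
    rw [h]
    have hdrop : ∀ i, ∑ j ∈ univ.filter (· ≠ i),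
        (θ j : ℂ) * d i * (C i j : ℂ) * (epsilonSigTau σ τ j i : ℂ)
        = ∑ j, (θ j : ℂ) * d i * (C i j : ℂ) * (epsilonSigTau σ τ j i : ℂ) := by
      intro i
      apply Finset.sum_filter_of_ne
      intro x _ hx
      rintro rfl
      apply hx
      simp [εdiag]
    set g : Fin (r + 1) → Fin (r + 1) → ℂ := fun j i =>
      (θ i : ℂ) * ((θ j : ℂ) * d i * (C i j : ℂ) * (epsilonSigTau σ τ j i : ℂ)) with hg
    have hganti : ∀ j i, g j i = -(g i j) := by
      intro j i
      have e1 : ((epsilonSigTau σ τ i j : ℤ) : ℂ) = -((epsilonSigTau σ τ j i : ℤ) : ℂ) := by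
        rw [εanti j i]; push_cast; ring
      simp only [hg]
      linear_combination ((θ j : ℂ) * (θ i : ℂ) * ((epsilonSigTau σ τ j i : ℤ) : ℂ)) * hsym i j
        + ((θ j : ℂ) * (θ i : ℂ) * d j * ((C j i : ℤ) : ℂ)) * e1
    have hStot : (∑ i, ∑ j, g j i) = 0 := by
      have key : (∑ i, ∑ j, g j i) = -(∑ i, ∑ j, g j i) := by
        calc (∑ i, ∑ j, g j i) = ∑ j, ∑ i, g j i := Finset.sum_comm
          _ = ∑ j, ∑ i, -(g i j) := by
              apply Finset.sum_congr rfl; intro j _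
              apply Finset.sum_congr rfl; intro i _
              exact hganti j i
          _ = -(∑ j, ∑ i, g i j) := by simp
      linear_combination key / 2
    have hc : (2 * (0 : ℂ) + ∑ i, (θ i : ℂ)
        * (-(-(∑ j ∈ univ.filter (· ≠ i),
            (θ j : ℂ) * d i * (C i j : ℂ) * (epsilonSigTau σ τ j i : ℂ))))) = 0 := by
      simp only [neg_neg, mul_zero, zero_add]
      calc (∑ i, (θ i : ℂ) * ∑ j ∈ univ.filter (· ≠ i),
              (θ j : ℂ) * d i * (C i j : ℂ) * (epsilonSigTau σ τ j i : ℂ))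
          = ∑ i, ∑ j, g j i := by
            apply Finset.sum_congr rfl; intro i _
            rw [hdrop i, Finset.mul_sum]
        _ = 0 := hStot
    rw [hc, zero_smul]
end

section
/- In the Poisson torus ℂ[c₀^{±1}, d₀^{±1}, …, c_n^{±1}, d_n^{±1}] with bracket {c_k, d_k} = 2 c_k d_k, {c_k, d_{k+1}} = −2 c_k d_{k+1}, {c_k, c_{k+1}} = −2 c_k c_{k+1} (indices mod n+1), all other generator brackets zero, the elements P = Π_{k} d_k and R = Π_k c_k d_k^{-1} are Casimirs: they Poisson-commute with all generators. -/
/-!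
STATEMENT 17: In the Poisson torus ℂ[c₀^{±1},…,c_n^{±1},d₀^{±1},…,d_n^{±1}] with
bracket {c_k,d_k} = 2c_kd_k, {c_k,d_{k+1}} = −2c_kd_{k+1}, {c_k,c_{k+1}} = −2c_kc_{k+1}
(indices mod n+1), all other generator brackets zero, the elements P = Π_k d_k and
R = Π_k c_k d_k⁻¹ are Casimirs.
-/

/-- The Laurent polynomial algebra ℂ[c₀^{±1},…,c_n^{±1},d₀^{±1},…,d_n^{±1}]. -/
abbrev TodaTorusC (n : ℕ) : Type := AddMonoidAlgebra ℂ ((Fin (n + 1) ⊕ Fin (n + 1)) → ℤ)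

/-- The generator c_k. -/
noncomputable def cgen {n : ℕ} (k : Fin (n + 1)) : TodaTorusC n :=
  AddMonoidAlgebra.single (Pi.single (Sum.inl k) (1 : ℤ)) (1 : ℂ)

/-- The generator d_k. -/
noncomputable def dgen {n : ℕ} (k : Fin (n + 1)) : TodaTorusC n :=
  AddMonoidAlgebra.single (Pi.single (Sum.inr k) (1 : ℤ)) (1 : ℂ)

/-- The inverse d_k⁻¹ of the generator d_k. -/
noncomputable def dginv {n : ℕ} (k : Fin (n + 1)) : TodaTorusC n :=
  AddMonoidAlgebra.single (-Pi.single (Sum.inr k) (1 : ℤ)) (1 : ℂ)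

/-! For each generator x, {x, ·} is a derivation which is log-canonical on the generators:
{x, g} = g · (λ_g x) with λ_g ∈ ℂ. A derivation multiplies a product by the sum of the
logarithmic derivatives of its factors (with d_k⁻¹ contributing −λ_{d_k}), so {x, P} and {x, R}
are P x resp. R x times a sum of λ's. For every x, the λ's over c_0, …, c_n and over d_0, …, d_n
have the form 2(δ_i − δ_j) in the index, which sums to 0. This needs the neighbours l ± 1 to be
distinct, i.e. n ≥ 2: for n = 1 the relations {c₀, c₁} = −2c₀c₁ and {c₁, c₀} = −2c₁c₀ contradict
skew-symmetry. -/

open Finset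

def hamiltonian {R A : Type*} [CommSemiring R] [CommRing A] [Algebra R A]
    (br : A →ₗ[R] A →ₗ[R] A) (leibniz : ∀ f g h, br f (g * h) = g * br f h + h * br f g)
    (f : A) : Derivation R A A :=
  Derivation.mk' (br f) (leibniz f)

namespace Derivation

section CommSemiring

variable {R A ι : Type*} [CommSemiring R] [CommSemiring A] [Algebra R A] (D : Derivation R A A)

theorem leibniz_mul_of_eq_mul {a b u v : A} (ha : D a = a * u) (hb : D b = b * v) :
    D (a * b) = a * b * (u + v) := by
  rw [D.leibniz, ha, hb, smul_eq_mul, smul_eq_mul]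
  ring

theorem leibniz_prod_of_eq_mul {s : Finset ι} {g u : ι → A}
    (h : ∀ i ∈ s, D (g i) = g i * u i) :
    D (∏ i ∈ s, g i) = (∏ i ∈ s, g i) * ∑ i ∈ s, u i := by
  induction s using Finset.cons_induction with
  | empty => simp
  | cons a s ha ih =>
    rw [prod_cons, sum_cons, D.leibniz_mul_of_eq_mul (h a (mem_cons_self a s))
      (ih fun i hi => h i (mem_cons_of_mem hi))]

end CommSemiring

theorem eq_mul_neg_of_mul_eq_one {R A : Type*} [CommRing R] [CommRing A] [Algebra R A]
    (D : Derivation R A A) {a b u : A} (hab : a * b = 1) (hb : D b = b * u) : D a = a * -u := by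
  rw [D.leibniz_of_mul_eq_one hab, hb, smul_eq_mul]
  linear_combination (-a * u) * hab

end Derivation

theorem Finset.sum_pi_single_sub_pi_single {ι M : Type*} [Fintype ι] [DecidableEq ι]
    [AddCommGroup M] (i j : ι) (c : M) : ∑ m, (Pi.single i c - Pi.single j c : ι → M) m = 0 := by
  simp [sum_sub_distrib]

namespace Fin

theorem add_one_ne_self {n : ℕ} (hn : 1 ≤ n) (l : Fin (n + 1)) : l + 1 ≠ l := by
  simp only [ne_eq, add_eq_left, Fin.one_eq_zero_iff]
  omega

open Fin.CommRing in
theorem add_one_ne_sub_one {n : ℕ} (hn : 2 ≤ n) (l : Fin (n + 1)) : l + 1 ≠ l - 1 := by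
  intro e
  have h2 : (1 + 1 : Fin (n + 1)) = 0 := by linear_combination e
  rw [Fin.ext_iff, Fin.val_add, Fin.val_one', Nat.mod_eq_of_lt (by omega : 1 < n + 1)] at h2
  simp only [val_zero, Nat.mod_eq_of_lt (by omega : 1 + 1 < n + 1)] at h2
  omega

end Fin

section TodaTorus

variable {n : ℕ}

theorem dginv_mul_dgen (k : Fin (n + 1)) : dginv k * dgen k = 1 := by
  rw [dgen, dginv, AddMonoidAlgebra.single_mul_single, mul_one, neg_add_cancel,
    AddMonoidAlgebra.one_def]

theorem casimirs_eq_zero_of_log_canonical (D : Derivation ℂ (TodaTorusC n) (TodaTorusC n))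
    (x : TodaTorusC n) {a b : Fin (n + 1) → ℂ}
    (hc : ∀ m, D (cgen m) = cgen m * (a m • x)) (hd : ∀ m, D (dgen m) = dgen m * (b m • x))
    (ha : ∑ m, a m = 0) (hb : ∑ m, b m = 0) :
    D (∏ k, dgen k) = 0 ∧ D (∏ k, cgen k * dginv k) = 0 := by
  have hdinv m : D (dginv m) = dginv m * -(b m • x) :=
    D.eq_mul_neg_of_mul_eq_one (dginv_mul_dgen m) (hd m)
  constructor
  · rw [D.leibniz_prod_of_eq_mul fun m _ => hd m, ← sum_smul, hb, zero_smul, mul_zero]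
  · rw [D.leibniz_prod_of_eq_mul fun m _ => D.leibniz_mul_of_eq_mul (hc m) (hdinv m)]
    simp only [← sub_eq_add_neg, ← sub_smul, ← sum_smul, sum_sub_distrib, ha, hb, sub_zero,
      zero_smul, mul_zero]

variable (br : TodaTorusC n →ₗ[ℂ] TodaTorusC n →ₗ[ℂ] TodaTorusC n)

theorem br_cgen_dgen (hn : 1 ≤ n)
    (hcd : ∀ k, br (cgen k) (dgen k) = 2 * (cgen k * dgen k))
    (hcd' : ∀ k, br (cgen k) (dgen (k + 1)) = -(2 : ℂ) • (cgen k * dgen (k + 1)))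
    (hcd0 : ∀ k l, l ≠ k → l ≠ k + 1 → br (cgen k) (dgen l) = 0) (l m : Fin (n + 1)) :
    br (cgen l) (dgen m) =
      dgen m * ((Pi.single l 2 - Pi.single (l + 1) 2 : Fin (n + 1) → ℂ) m • cgen l) := by
  by_cases hl : m = l
  · subst hl
    rw [hcd, Pi.sub_apply, Pi.single_eq_same, Pi.single_eq_of_ne (Fin.add_one_ne_self hn m).symm,
      sub_zero, ofNat_smul_eq_nsmul, nsmul_eq_mul]
    ring
  by_cases hl1 : m = l + 1
  · subst hl1
    simp [hcd', Fin.add_one_ne_self hn l, mul_comm]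
  simp [hcd0 l m hl hl1, hl, hl1]

theorem br_dgen_cgen (hn : 1 ≤ n) (skew : ∀ f g, br f g = -br g f)
    (hcd : ∀ k, br (cgen k) (dgen k) = 2 * (cgen k * dgen k))
    (hcd' : ∀ k, br (cgen k) (dgen (k + 1)) = -(2 : ℂ) • (cgen k * dgen (k + 1)))
    (hcd0 : ∀ k l, l ≠ k → l ≠ k + 1 → br (cgen k) (dgen l) = 0) (l m : Fin (n + 1)) :
    br (dgen l) (cgen m) =
      cgen m * ((Pi.single (l - 1) 2 - Pi.single l 2 : Fin (n + 1) → ℂ) m • dgen l) := by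
  rw [skew, br_cgen_dgen br hn hcd hcd' hcd0]
  simp only [Pi.sub_apply, Pi.single_apply, eq_sub_iff_add_eq, eq_comm (b := l)]
  rw [mul_comm (dgen l), mul_smul_comm, smul_mul_assoc, ← neg_smul, neg_sub]

theorem br_cgen_cgen (hn : 2 ≤ n) (skew : ∀ f g, br f g = -br g f)
    (hcc : ∀ k, br (cgen k) (cgen (k + 1)) = -(2 : ℂ) • (cgen k * cgen (k + 1)))
    (hcc0 : ∀ k l, l ≠ k + 1 → k ≠ l + 1 → br (cgen k) (cgen l) = 0) (l m : Fin (n + 1)) :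
    br (cgen l) (cgen m) =
      cgen m * ((Pi.single (l - 1) 2 - Pi.single (l + 1) 2 : Fin (n + 1) → ℂ) m • cgen l) := by
  by_cases hl1 : m = l + 1
  · subst hl1
    simp [hcc, Fin.add_one_ne_sub_one hn l, mul_comm]
  by_cases hl : m = l - 1
  · subst hl
    have h := hcc (l - 1)
    rw [sub_add_cancel] at h
    rw [skew, h]
    simp [(Fin.add_one_ne_sub_one hn l).symm]
  simp [hcc0 l m hl1 (by rintro rfl; simp at hl), hl, hl1]

theorem ne_one_of_br_cgen_add_one (skew : ∀ f g, br f g = -br g f)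
    (hcc : ∀ k, br (cgen k) (cgen (k + 1)) = -(2 : ℂ) • (cgen k * cgen (k + 1))) : n ≠ 1 := by
  rintro rfl
  have h0 := hcc 0
  have h1 := hcc 1
  simp only [show (1 + 1 : Fin 2) = 0 from rfl, zero_add] at h0 h1
  rw [skew, h1, mul_comm, neg_smul, neg_neg, ← sub_eq_zero, sub_neg_eq_add, ← add_smul] at h0
  rcases smul_eq_zero.mp h0 with h | h
  · norm_num at h
  · simp [cgen, AddMonoidAlgebra.single_mul_single] at h

end TodaTorus

theorem toda_torus_casimirs (n : ℕ) (hn : 1 ≤ n)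
    (br : TodaTorusC n →ₗ[ℂ] TodaTorusC n →ₗ[ℂ] TodaTorusC n)
    (skew : ∀ f g, br f g = -br g f)
    (leibniz : ∀ f g h, br f (g * h) = g * br f h + h * br f g)
    (hcd : ∀ k, br (cgen k) (dgen k) = 2 * (cgen k * dgen k))
    (hcd' : ∀ k, br (cgen k) (dgen (k + 1)) = -(2 : ℂ) • (cgen k * dgen (k + 1)))
    (hcc : ∀ k, br (cgen k) (cgen (k + 1)) = -(2 : ℂ) • (cgen k * cgen (k + 1)))
    -- all other brackets of generators vanish:
    (hcd0 : ∀ k l, l ≠ k → l ≠ k + 1 → br (cgen k) (dgen l) = 0)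
    (hcc0 : ∀ k l, l ≠ k + 1 → k ≠ l + 1 → br (cgen k) (cgen l) = 0)
    (hdd0 : ∀ k l, br (dgen k) (dgen l) = 0) :
    -- P = Π_k d_k and R = Π_k c_k d_k⁻¹ Poisson-commute with all generators:
    let P : TodaTorusC n := ∏ k, dgen k
    let R : TodaTorusC n := ∏ k, (cgen k * dginv k)
    ∀ k : Fin (n + 1),
      br P (cgen k) = 0 ∧ br P (dgen k) = 0 ∧
      br R (cgen k) = 0 ∧ br R (dgen k) = 0 := by
  intro P R k
  have hn2 : 2 ≤ n := by
    have := ne_one_of_br_cgen_add_one br skew hcc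
    omega
  obtain ⟨hcP, hcR⟩ :=
    casimirs_eq_zero_of_log_canonical (hamiltonian br leibniz (cgen k)) (cgen k)
    (br_cgen_cgen br hn2 skew hcc hcc0 k) (br_cgen_dgen br hn hcd hcd' hcd0 k)
    (sum_pi_single_sub_pi_single _ _ _) (sum_pi_single_sub_pi_single _ _ _)
  obtain ⟨hdP, hdR⟩ :=
    casimirs_eq_zero_of_log_canonical (b := 0) (hamiltonian br leibniz (dgen k)) (dgen k)
    (br_dgen_cgen br hn skew hcd hcd' hcd0 k) (fun m => by simp [hamiltonian, hdd0])
    (sum_pi_single_sub_pi_single _ _ _) (by simp)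
  rw [skew P, skew P, skew R, skew R]
  exact ⟨neg_eq_zero.mpr hcP, neg_eq_zero.mpr hdP, neg_eq_zero.mpr hcR, neg_eq_zero.mpr hdR⟩
end
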